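/- Given an unambiguous, clean and trim 1-nT computing a continuous partial function f : A^ω ⇀ B^ω, there exists an unambiguous, clean, trim and productive 1-nT computing the same partial function f. -/

import Mathlib

/-- `u` is a prefix of the infinite word `y`. -/
def PrefixOf {B : Type} (u : List B) (y : ℕ → B) : Prop :=
  ∀ (i : ℕ) (h : i < u.length), u.get ⟨i, h⟩ = y i

/-- Concatenation of a finite word and an infinite word. -/
def listPrepend {B : Type} (u : List B) (y : ℕ → B) : ℕ → B :=
  fun i => if h : i < u.length then u.get ⟨i, h⟩ else y (i - u.length)

/-- The finite word `v` repeated `n` times. -/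
def powList {B : Type} (v : List B) (n : ℕ) : List B :=
  (List.replicate n v).flatten

/-- The infinite word `y` equals `u · v^ω` (meaningful when `v ≠ []`). -/
def EqUVomega {B : Type} (u v : List B) (y : ℕ → B) : Prop :=
  ∀ n : ℕ, PrefixOf (u ++ powList v n) y

/-- A one-way nondeterministic transducer (1-nT). The output function is given on
all triples; it is only relevant on the transition relation. -/
structure NT (A B : Type) where
  Q : Type
  fin : Fintype Q
  I : Set Q
  F : Set Q
  trans : Q → A → Q → Prop
  out : Q → A → Q → List B

attribute [instance] NT.fin

namespace NT

variable {A B : Type}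

/-- `FinRun T q u α q'` means `q →^{u|α} q'`. -/
inductive FinRun (T : NT A B) : T.Q → List A → List B → T.Q → Prop
  | nil (q : T.Q) : FinRun T q [] [] q
  | cons {q q' q'' : T.Q} {a : A} {u : List A} {α : List B} :
      T.trans q a q' → FinRun T q' u α q'' →
      FinRun T q (a :: u) (T.out q a q' ++ α) q''

/-- Infinite run on `x` (the `i`-th transition reads `x i`). -/
def IsRun (T : NT A B) (x : ℕ → A) (ρ : ℕ → T.Q) : Prop :=
  ∀ i : ℕ, T.trans (ρ i) (x i) (ρ (i + 1))

/-- Büchi condition: final states are visited infinitely often. -/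
def Final (T : NT A B) (ρ : ℕ → T.Q) : Prop :=
  ∀ i : ℕ, ∃ j : ℕ, i ≤ j ∧ ρ j ∈ T.F

/-- Accepting run: an initial and final run. -/
def Accepting (T : NT A B) (x : ℕ → A) (ρ : ℕ → T.Q) : Prop :=
  T.IsRun x ρ ∧ ρ 0 ∈ T.I ∧ T.Final ρ

/-- Output along the first `n` transitions of a run. -/
def outPrefix (T : NT A B) (x : ℕ → A) (ρ : ℕ → T.Q) (n : ℕ) : List B :=
  ((List.range n).map (fun i => T.out (ρ i) (x i) (ρ (i + 1)))).flatten

/-- The output along the run is infinite. -/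
def InfiniteOutput (T : NT A B) (x : ℕ → A) (ρ : ℕ → T.Q) : Prop :=
  ∀ m : ℕ, ∃ n : ℕ, m ≤ (T.outPrefix x ρ n).length

/-- The (infinite) output along the run equals `y`. -/
def OutEq (T : NT A B) (x : ℕ → A) (ρ : ℕ → T.Q) (y : ℕ → B) : Prop :=
  ∀ n : ℕ, PrefixOf (T.outPrefix x ρ n) y

/-- Every input labels at most one accepting run. -/
def Unambiguous (T : NT A B) : Prop :=
  ∀ x ρ₁ ρ₂, T.Accepting x ρ₁ → T.Accepting x ρ₂ → ρ₁ = ρ₂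

/-- The partial function computed by an unambiguous 1-nT. -/
def Computes (T : NT A B) (f : (ℕ → A) → Option (ℕ → B)) : Prop :=
  ∀ x y, f x = some y ↔
    ∃ ρ, T.Accepting x ρ ∧ T.InfiniteOutput x ρ ∧ T.OutEq x ρ y

/-- Every state occurs in some accepting run. -/
def Trim (T : NT A B) : Prop :=
  ∀ q : T.Q, ∃ x ρ, T.Accepting x ρ ∧ ∃ i, ρ i = q

/-- The output along every accepting run is infinite. -/
def Clean (T : NT A B) : Prop :=
  ∀ x ρ, T.Accepting x ρ → T.InfiniteOutput x ρ

end NT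

/-- Continuity (for the Cantor topology) of a partial function on infinite words. -/
def ContinuousPartial {A B : Type} (f : (ℕ → A) → Option (ℕ → B)) : Prop :=
  ∀ x fx, f x = some fx → ∀ n : ℕ, ∃ p : ℕ, ∀ y fy, f y = some fy →
    (∀ i < p, x i = y i) → ∀ i < n, fx i = fy i

namespace NT

variable {A B : Type}

/-- Productivity of a (clean) 1-nT. -/
def Productive (T : NT A B) : Prop :=
  ∀ (q₁ q₂ q₁' q₂' : T.Q) (u u' : List A) (α₁ α₁' α₂ α₂' : List B),
    q₁ ∈ T.I → q₂ ∈ T.I → q₁' ∈ T.F → u' ≠ [] →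
    T.FinRun q₁ u α₁ q₁' → T.FinRun q₁' u' α₁' q₁' →
    T.FinRun q₂ u α₂ q₂' → T.FinRun q₂' u' α₂' q₂' →
    α₂' ≠ []

end NT

/-!
Call a state `q` of `T` predictable if all final runs from `q` produce the same output and this
output is ultimately periodic. Suppose an accepting loop on `u'` is read in parallel with a loop on
`u'` at `q₂'` that produces nothing. Pumping both loops yields inputs that agree with the accepting
lasso `u u'^ω` on longer and longer prefixes, so by continuity every final run from `q₂'` produces
the same suffix of the ultimately periodic output of the lasso: `q₂'` is predictable.

The transducer `T.eager` simulates `T`, but from a predictable state on it emits the known future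
output in advance, at least one letter per transition, and remembers the suffix still owed. That
suffix is a shift of an ultimately periodic word, so finitely many states suffice. The silent loops
forbidden by productivity could only sit at unpredictable states, where they cannot exist.
Restricting to the states that occur on accepting runs makes the result trim.
-/

section Words

variable {α : Type}

theorem prefixOf_iff {u : List α} {y : ℕ → α} :
    PrefixOf u y ↔ ∀ (i : ℕ) (h : i < u.length), u[i] = y i := by
  simp [PrefixOf]

theorem PrefixOf.of_isPrefix {u v : List α} {y : ℕ → α} (h : u <+: v) (hv : PrefixOf v y) :
    PrefixOf u y := by
  rw [prefixOf_iff] at hv ⊢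
  intro i hi
  rw [h.getElem hi, hv]

theorem PrefixOf.eq_of_lt {u : List α} {y y' : ℕ → α} (h : PrefixOf u y) (h' : PrefixOf u y')
    {i : ℕ} (hi : i < u.length) : y i = y' i := by
  rw [prefixOf_iff] at h h'
  rw [← h i hi, h' i hi]

theorem prefixOf_ofFn (y : ℕ → α) (n : ℕ) : PrefixOf (List.ofFn fun i : Fin n => y i) y := by
  simp [prefixOf_iff]

theorem eq_of_forall_exists_prefixOf {y y' : ℕ → α}
    (h : ∀ m, ∃ u : List α, m < u.length ∧ PrefixOf u y ∧ PrefixOf u y') : y = y' := by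
  funext i
  obtain ⟨u, hi, hu, hu'⟩ := h i
  exact hu.eq_of_lt hu' hi

theorem listPrepend_of_lt (u : List α) (y : ℕ → α) {i : ℕ} (h : i < u.length) :
    listPrepend u y i = u[i] := by
  simp [listPrepend, h]

@[simp]
theorem listPrepend_add_length (u : List α) (y : ℕ → α) (i : ℕ) :
    listPrepend u y (i + u.length) = y i := by
  simp [listPrepend]

theorem listPrepend_of_le (u : List α) (y : ℕ → α) {i : ℕ} (h : u.length ≤ i) :
    listPrepend u y i = y (i - u.length) := by
  rw [← listPrepend_add_length u y, Nat.sub_add_cancel h]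

theorem prefixOf_listPrepend (u : List α) (y : ℕ → α) : PrefixOf u (listPrepend u y) :=
  prefixOf_iff.2 fun _ hi => (listPrepend_of_lt u y hi).symm

theorem prefixOf_append_listPrepend_iff {u v : List α} {y : ℕ → α} :
    PrefixOf (u ++ v) (listPrepend u y) ↔ PrefixOf v y := by
  simp only [prefixOf_iff, List.length_append]
  constructor
  · intro h i hi
    simpa [List.getElem_append_right] using h (i + u.length) (by omega)
  · intro h i hi
    rcases lt_or_ge i u.length with hu | hu
    · rw [List.getElem_append_left hu, listPrepend_of_lt _ _ hu]
    · rw [List.getElem_append_right hu, listPrepend_of_le _ _ hu, h]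

theorem listPrepend_eq_of_prefixOf {u : List α} {y : ℕ → α} (h : PrefixOf u y) :
    listPrepend u (fun i => y (i + u.length)) = y := by
  funext i
  rcases lt_or_ge i u.length with hu | hu
  · rw [listPrepend_of_lt _ _ hu, prefixOf_iff.1 h i hu]
  · rw [listPrepend_of_le _ _ hu, Nat.sub_add_cancel hu]

theorem listPrepend_append (u v : List α) (y : ℕ → α) :
    listPrepend (u ++ v) y = listPrepend u (listPrepend v y) := by
  have h : PrefixOf (u ++ v) (listPrepend u (listPrepend v y)) :=
    prefixOf_append_listPrepend_iff.2 (prefixOf_listPrepend v y)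
  conv_rhs => rw [← listPrepend_eq_of_prefixOf h]
  congr 1
  funext i
  rw [List.length_append, Nat.add_comm u.length, ← Nat.add_assoc, listPrepend_add_length,
    listPrepend_add_length]

theorem PrefixOf.append {u v : List α} {y : ℕ → α} (hu : PrefixOf u y)
    (hv : PrefixOf v fun i => y (i + u.length)) : PrefixOf (u ++ v) y := by
  rw [← listPrepend_eq_of_prefixOf hu]
  exact prefixOf_append_listPrepend_iff.2 hv

theorem listPrepend_injective (u : List α) : Function.Injective (listPrepend u) := by
  intro y y' h
  funext i
  simpa using congrFun h (i + u.length)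

theorem powList_succ (v : List α) (n : ℕ) : powList v (n + 1) = v ++ powList v n := by
  simp [powList, List.replicate_succ]

theorem powList_succ' (v : List α) (n : ℕ) : powList v (n + 1) = powList v n ++ v := by
  simp [powList, List.replicate_succ']

@[simp]
theorem length_powList (v : List α) (n : ℕ) : (powList v n).length = n * v.length := by
  induction n with
  | zero => simp [powList]
  | succ n ih => rw [powList_succ', List.length_append, ih, Nat.succ_mul]

@[simp]
theorem powList_nil (n : ℕ) : powList ([] : List α) n = [] := by
  simp [powList]

theorem EqUVomega.listPrepend {v : List α} {z : ℕ → α} (h : EqUVomega [] v z) (u : List α) :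
    EqUVomega u v (listPrepend u z) :=
  fun n => prefixOf_append_listPrepend_iff.2 (by simpa using h n)

theorem EqUVomega.periodic {u v : List α} {y : ℕ → α} (h : EqUVomega u v y) {i : ℕ}
    (hi : u.length ≤ i) : y (i + v.length) = y i := by
  rcases Nat.eq_zero_or_pos v.length with hv | hv
  · rw [hv, Nat.add_zero]
  have hmul : i < i * v.length + v.length := by nlinarith
  have h₁ := prefixOf_iff.1 (h (i + 1 + 1)) (i + v.length)
    (by simp only [List.length_append, length_powList, add_one_mul]; omega)
  have h₂ := prefixOf_iff.1 (h (i + 1)) i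
    (by simp only [List.length_append, length_powList, add_one_mul]; omega)
  rw [← h₁, ← h₂, List.getElem_append_right (by omega), List.getElem_append_right hi]
  simp only [powList_succ v (i + 1)]
  rw [List.getElem_append_right (by omega)]
  congr 1
  omega

def shifts (y : ℕ → α) : Set (ℕ → α) := Set.range fun k i => y (i + k)

theorem shifts_shift_subset (y : ℕ → α) (k : ℕ) : shifts (fun i => y (i + k)) ⊆ shifts y := by
  rintro _ ⟨j, rfl⟩
  exact ⟨j + k, by simp [Nat.add_assoc]⟩

theorem finite_shifts_of_periodic {y : ℕ → α} {m L : ℕ} (hL : 0 < L)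
    (h : ∀ i, m ≤ i → y (i + L) = y i) : (shifts y).Finite := by
  have hred : ∀ k, ∃ j < m + L, (fun i => y (i + k)) = fun i => y (i + j) := by
    intro k
    induction k using Nat.strong_induction_on with
    | _ k ih =>
      rcases lt_or_ge k (m + L) with hk | hk
      · exact ⟨k, hk, rfl⟩
      obtain ⟨j, hj, hkj⟩ := ih (k - L) (by omega)
      refine ⟨j, hj, funext fun i => ?_⟩
      rw [← congrFun hkj i, ← h (i + (k - L)) (by omega)]
      congr 1
      omega
  refine ((Set.finite_Iio (m + L)).image fun j i => y (i + j)).subset ?_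
  rintro _ ⟨k, rfl⟩
  obtain ⟨j, hj, hkj⟩ := hred k
  exact ⟨j, hj, hkj.symm⟩

theorem EqUVomega.finite_shifts {u v : List α} {y : ℕ → α} (h : EqUVomega u v y) (hv : v ≠ []) :
    (shifts y).Finite :=
  finite_shifts_of_periodic (List.length_pos_iff.2 hv) fun _ hi => h.periodic hi

end Words

theorem ContinuousPartial.eq_of_forall_agree {A B : Type} {f : (ℕ → A) → Option (ℕ → B)}
    (hf : ContinuousPartial f) {x : ℕ → A} {y y' : ℕ → B} (hx : f x = some y)
    (h : ∀ p, ∃ x', (∀ i < p, x i = x' i) ∧ f x' = some y') : y = y' := by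
  funext i
  obtain ⟨p, hp⟩ := hf x y hx (i + 1)
  obtain ⟨x', hxx', hx'⟩ := h p
  exact hp x' y' hx' hxx' i (by omega)

namespace NT

variable {A B : Type} (T : NT A B)

section Runs

variable {x : ℕ → A} {ρ : ℕ → T.Q}

@[simp]
theorem outPrefix_zero (x : ℕ → A) (ρ : ℕ → T.Q) : T.outPrefix x ρ 0 = [] := by
  simp [outPrefix]

theorem outPrefix_succ (x : ℕ → A) (ρ : ℕ → T.Q) (n : ℕ) :
    T.outPrefix x ρ (n + 1) = T.outPrefix x ρ n ++ T.out (ρ n) (x n) (ρ (n + 1)) := by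
  simp [outPrefix, List.range_succ]

theorem outPrefix_add (x : ℕ → A) (ρ : ℕ → T.Q) (k n : ℕ) :
    T.outPrefix x ρ (k + n) =
      T.outPrefix x ρ k ++ T.outPrefix (fun i => x (i + k)) (fun i => ρ (i + k)) n := by
  induction n with
  | zero => simp
  | succ n ih =>
    rw [← Nat.add_assoc, outPrefix_succ, ih, outPrefix_succ, List.append_assoc,
      Nat.add_right_comm n 1 k, Nat.add_comm n k]

theorem outPrefix_succ_eq_out_append (x : ℕ → A) (ρ : ℕ → T.Q) (n : ℕ) :
    T.outPrefix x ρ (n + 1) =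
      T.out (ρ 0) (x 0) (ρ 1) ++ T.outPrefix (fun i => x (i + 1)) (fun i => ρ (i + 1)) n := by
  rw [Nat.add_comm, outPrefix_add]
  congr 1
  simp [outPrefix]

theorem outPrefix_isPrefix (x : ℕ → A) (ρ : ℕ → T.Q) {m n : ℕ} (h : m ≤ n) :
    T.outPrefix x ρ m <+: T.outPrefix x ρ n := by
  obtain ⟨k, rfl⟩ := Nat.exists_eq_add_of_le h
  rw [outPrefix_add]
  exact List.prefix_append _ _

theorem outPrefix_congr (x : ℕ → A) {ρ ρ' : ℕ → T.Q} {n : ℕ} (h : ∀ i ≤ n, ρ i = ρ' i) :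
    T.outPrefix x ρ n = T.outPrefix x ρ' n := by
  simp only [outPrefix]
  congr 1
  refine List.map_congr_left fun i hi => ?_
  rw [List.mem_range] at hi
  rw [h i hi.le, h (i + 1) hi]

theorem IsRun.shift (h : T.IsRun x ρ) (k : ℕ) :
    T.IsRun (fun i => x (i + k)) (fun i => ρ (i + k)) := fun i => by
  simpa only [Nat.add_right_comm i 1 k] using h (i + k)

theorem final_shift_iff (k : ℕ) : T.Final (fun i => ρ (i + k)) ↔ T.Final ρ := by
  constructor
  · intro h i
    obtain ⟨j, hij, hj⟩ := h i
    exact ⟨j + k, by omega, hj⟩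
  · intro h i
    obtain ⟨j, hij, hj⟩ := h (i + k)
    exact ⟨j - k, by omega, show ρ (j - k + k) ∈ T.F by rwa [Nat.sub_add_cancel (by omega)]⟩

theorem infiniteOutput_shift_iff (k : ℕ) :
    T.InfiniteOutput (fun i => x (i + k)) (fun i => ρ (i + k)) ↔ T.InfiniteOutput x ρ := by
  constructor
  · intro h m
    obtain ⟨n, hn⟩ := h m
    refine ⟨k + n, ?_⟩
    rw [outPrefix_add, List.length_append]
    omega
  · intro h m
    obtain ⟨n, hn⟩ := h (m + (T.outPrefix x ρ k).length)
    refine ⟨n, ?_⟩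
    have := (T.outPrefix_isPrefix x ρ (Nat.le_add_left n k)).length_le
    rw [outPrefix_add, List.length_append] at this
    omega

theorem outEq_shift_iff (k : ℕ) {y : ℕ → B} :
    T.OutEq (fun i => x (i + k)) (fun i => ρ (i + k)) y ↔
      T.OutEq x ρ (listPrepend (T.outPrefix x ρ k) y) := by
  constructor
  · intro h n
    refine PrefixOf.of_isPrefix (T.outPrefix_isPrefix x ρ (Nat.le_add_left n k)) ?_
    rw [outPrefix_add]
    exact prefixOf_append_listPrepend_iff.2 (h n)
  · intro h n
    have := h (k + n)
    rwa [outPrefix_add, prefixOf_append_listPrepend_iff] at this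

theorem OutEq.unique {y y' : ℕ → B} (h : T.OutEq x ρ y) (h' : T.OutEq x ρ y')
    (hinf : T.InfiniteOutput x ρ) : y = y' :=
  eq_of_forall_exists_prefixOf fun m =>
    let ⟨n, hn⟩ := hinf (m + 1)
    ⟨T.outPrefix x ρ n, by omega, h n, h' n⟩

theorem exists_outEq (h : T.InfiniteOutput x ρ) : ∃ y, T.OutEq x ρ y := by
  choose N hN using fun i => h (i + 1)
  refine ⟨fun i => (T.outPrefix x ρ (N i))[i]'(by have := hN i; omega), fun n => ?_⟩
  refine prefixOf_iff.2 fun i hi => ?_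
  rcases le_total n (N i) with hn | hn
  · exact (T.outPrefix_isPrefix x ρ hn).getElem hi
  · exact ((T.outPrefix_isPrefix x ρ hn).getElem _).symm

end Runs

section FiniteRuns

variable {q q' q'' : T.Q} {u v : List A} {α β : List B}

theorem FinRun.append (h₁ : T.FinRun q u α q') (h₂ : T.FinRun q' v β q'') :
    T.FinRun q (u ++ v) (α ++ β) q'' := by
  induction h₁ with
  | nil => simpa using h₂
  | cons ht _ ih =>
    rw [List.cons_append, List.append_assoc]
    exact .cons ht (ih h₂)

theorem FinRun.pow (h : T.FinRun q v β q) (n : ℕ) : T.FinRun q (powList v n) (powList β n) q := by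
  induction n with
  | zero => exact .nil q
  | succ n ih =>
    rw [powList_succ', powList_succ']
    exact ih.append T h

theorem FinRun.exists_glue (h : T.FinRun q u α q') (σ : ℕ → T.Q) (hσ : σ 0 = q') :
    ∃ ρ : ℕ → T.Q, ρ 0 = q ∧ (∀ m, ρ (m + u.length) = σ m) ∧
      ∀ x, PrefixOf u x → (∀ i < u.length, T.trans (ρ i) (x i) (ρ (i + 1))) ∧
        T.outPrefix x ρ u.length = α := by
  induction h with
  | nil q => exact ⟨σ, hσ, fun _ => rfl, fun _ _ => ⟨fun _ hi => absurd hi (by simp), rfl⟩⟩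
  | @cons q q₁ _ a u α ht _ ih =>
    obtain ⟨ρ, hρ0, hρσ, hρx⟩ := ih hσ
    refine ⟨fun | 0 => q | i + 1 => ρ i, rfl, hρσ, fun x hx => ?_⟩
    have hx0 : x 0 = a := (prefixOf_iff.1 hx 0 (by simp)).symm
    obtain ⟨htr, hout⟩ := hρx (fun i => x (i + 1))
      (prefixOf_iff.2 fun i hi => prefixOf_iff.1 hx (i + 1) (by simpa using hi))
    refine ⟨fun i hi => ?_, ?_⟩
    · cases i with
      | zero => simpa [hx0, hρ0] using ht
      | succ i => exact htr i (by simpa using hi)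
    · rw [List.length_cons, outPrefix_succ_eq_out_append]
      simp [hx0, hρ0, hout]

theorem FinRun.exists_run_prepend (h : T.FinRun q u α q') {z : ℕ → A} {σ : ℕ → T.Q}
    (hσ0 : σ 0 = q') (hσ : T.IsRun z σ) :
    ∃ ρ, ρ 0 = q ∧ T.IsRun (listPrepend u z) ρ ∧ (fun i => ρ (i + u.length)) = σ ∧
      T.outPrefix (listPrepend u z) ρ u.length = α := by
  obtain ⟨ρ, hρ0, hρσ, hρx⟩ := h.exists_glue T σ hσ0
  obtain ⟨htr, hout⟩ := hρx _ (prefixOf_listPrepend u z)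
  refine ⟨ρ, hρ0, fun i => ?_, funext hρσ, hout⟩
  rcases lt_or_ge i u.length with hi | hi
  · exact htr i hi
  · obtain ⟨m, rfl⟩ := Nat.exists_eq_add_of_le' hi
    rw [listPrepend_add_length, hρσ, Nat.add_right_comm, hρσ]
    exact hσ m

theorem FinRun.exists_loop_run (h : T.FinRun q v β q) (hv : v ≠ []) :
    ∃ z σ, EqUVomega [] v z ∧ σ 0 = q ∧ T.IsRun z σ ∧
      ∀ c, σ (c * v.length) = q ∧ T.outPrefix z σ (c * v.length) = powList β c := by
  obtain ⟨p, hp0, hpq, hpx⟩ := h.exists_glue T (fun _ => q) rfl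
  set L := v.length
  have hL : 0 < L := List.length_pos_iff.2 hv
  have hpL : p L = p 0 := by rw [hp0, ← hpq 0, Nat.zero_add]
  have hpmod : ∀ j ≤ L, p (j % L) = p j := fun j hj => by
    rcases hj.lt_or_eq with hj | rfl
    · rw [Nat.mod_eq_of_lt hj]
    · rw [Nat.mod_self, hpL]
  let z : ℕ → A := fun i => v[i % L]'(Nat.mod_lt _ hL)
  have hz : ∀ c, PrefixOf v fun i => z (i + c * L) := fun c => prefixOf_iff.2
    fun i (hi : i < L) => by simp [z, Nat.add_mul_mod_self_right, Nat.mod_eq_of_lt hi]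
  have hzc : ∀ c, (fun i => z (i + c * L)) = z := fun c => funext fun i => by
    simp [z, Nat.add_mul_mod_self_right]
  let σ : ℕ → T.Q := fun i => p (i % L)
  have hσ : ∀ j c, j ≤ L → σ (j + c * L) = p j := fun j c hj => by
    simp only [σ, Nat.add_mul_mod_self_right, hpmod j hj]
  have hσc : ∀ c, (fun i => σ (i + c * L)) = σ := fun c => funext fun i => by
    simp [σ, Nat.add_mul_mod_self_right]
  have hσL : T.outPrefix z σ L = β := by
    rw [T.outPrefix_congr z (ρ' := p) fun i hi => by simpa using hσ i 0 hi]
    simpa [hzc] using ((hpx _ (hz 0)).2)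
  refine ⟨z, σ, fun n => ?_, by simp [σ, hp0], fun i => ?_, fun c => ⟨?_, ?_⟩⟩
  · induction n with
    | zero => exact prefixOf_iff.2 fun i hi => by simp [powList] at hi
    | succ n ih =>
      rw [List.nil_append] at ih ⊢
      rw [powList_succ']
      exact ih.append (by simpa using hz n)
  · obtain ⟨j, c, hj, rfl⟩ : ∃ j c, j < L ∧ i = j + c * L :=
      ⟨i % L, i / L, Nat.mod_lt _ hL, (Nat.mod_add_div' i L).symm⟩
    rw [Nat.add_right_comm, hσ j c hj.le, hσ (j + 1) c hj]
    exact (hpx _ (hz c)).1 j hj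
  · simpa [hp0] using hσ 0 c (Nat.zero_le _)
  · induction c with
    | zero => simp [powList]
    | succ c ih => rw [add_one_mul, outPrefix_add, ih, hσc, hzc, hσL, powList_succ']

end FiniteRuns

section Futures

variable {q q' : T.Q} {x : ℕ → A} {ρ : ℕ → T.Q} {y : ℕ → B}

def Produces (x : ℕ → A) (ρ : ℕ → T.Q) (y : ℕ → B) : Prop :=
  T.IsRun x ρ ∧ T.Final ρ ∧ T.InfiniteOutput x ρ ∧ T.OutEq x ρ y

def IsFutureOutput (q : T.Q) (y : ℕ → B) : Prop :=
  ∃ x ρ, ρ 0 = q ∧ T.Produces x ρ y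

theorem Produces.shift (h : T.Produces x ρ y) (k : ℕ) :
    T.Produces (fun i => x (i + k)) (fun i => ρ (i + k))
      (fun i => y (i + (T.outPrefix x ρ k).length)) :=
  ⟨h.1.shift T k, (T.final_shift_iff k).2 h.2.1, (T.infiniteOutput_shift_iff k).2 h.2.2.1,
    (T.outEq_shift_iff k).2 (by rw [listPrepend_eq_of_prefixOf (h.2.2.2 k)]; exact h.2.2.2)⟩

theorem Produces.isFutureOutput (h : T.Produces x ρ y) (k : ℕ) :
    T.IsFutureOutput (ρ k) (fun i => y (i + (T.outPrefix x ρ k).length)) :=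
  ⟨_, _, by simp, h.shift T k⟩

theorem FinRun.produces_listPrepend {u : List A} {α : List B} (h : T.FinRun q u α q')
    {z : ℕ → A} {σ : ℕ → T.Q} (hσ0 : σ 0 = q') (hσ : T.Produces z σ y) :
    ∃ ρ, ρ 0 = q ∧ T.Produces (listPrepend u z) ρ (listPrepend α y) := by
  obtain ⟨ρ, hρ0, hρ, hρσ, hρα⟩ := h.exists_run_prepend T hσ0 hσ.1
  have hz : (fun i => listPrepend u z (i + u.length)) = z := funext (listPrepend_add_length u z)
  refine ⟨ρ, hρ0, hρ, ?_, ?_, ?_⟩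
  · rw [← T.final_shift_iff u.length, hρσ]
    exact hσ.2.1
  · rw [← T.infiniteOutput_shift_iff u.length, hρσ, hz]
    exact hσ.2.2.1
  · rw [← hρα, ← outEq_shift_iff, hρσ, hz]
    exact hσ.2.2.2

theorem IsFutureOutput.listPrepend_out {a : A} (ht : T.trans q a q')
    (h : T.IsFutureOutput q' y) : T.IsFutureOutput q (listPrepend (T.out q a q') y) := by
  obtain ⟨z, σ, hσ0, hσ⟩ := h
  obtain ⟨ρ, hρ0, hρ⟩ := (FinRun.cons ht (.nil q')).produces_listPrepend T hσ0 hσ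
  exact ⟨_, ρ, hρ0, by simpa using hρ⟩

theorem exists_isFutureOutput (hTr : T.Trim) (hCl : T.Clean) (q : T.Q) :
    ∃ y, T.IsFutureOutput q y := by
  obtain ⟨x, ρ, hacc, i, rfl⟩ := hTr q
  obtain ⟨y, hy⟩ := T.exists_outEq (hCl x ρ hacc)
  exact ⟨_, Produces.isFutureOutput T ⟨hacc.1, hacc.2.2, hCl x ρ hacc, hy⟩ i⟩

end Futures

theorem exists_eqUVomega_of_lasso {f : (ℕ → A) → Option (ℕ → B)} (hCl : T.Clean)
    (hT : T.Computes f) {q q' : T.Q} {u v : List A} {α β : List B} (hq : q ∈ T.I)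
    (hq' : q' ∈ T.F) (hv : v ≠ []) (h : T.FinRun q u α q') (hloop : T.FinRun q' v β q') :
    ∃ x y, EqUVomega u v x ∧ EqUVomega α β y ∧ β ≠ [] ∧ f x = some y := by
  obtain ⟨z, σ, hz, hσ0, hσ, hσc⟩ := hloop.exists_loop_run T hv
  obtain ⟨ρ, hρ0, hρ, hρσ, hρα⟩ := h.exists_run_prepend T hσ0 hσ
  set x := listPrepend u z
  have hL : 0 < v.length := List.length_pos_iff.2 hv
  have hout : ∀ c, T.outPrefix x ρ (u.length + c * v.length) = α ++ powList β c := fun c => by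
    rw [outPrefix_add, hρα, hρσ, funext (listPrepend_add_length u z), (hσc c).2]
  have hacc : T.Accepting x ρ := by
    refine ⟨hρ, hρ0 ▸ hq, fun i => ⟨i * v.length + u.length, by nlinarith, ?_⟩⟩
    rw [show ρ (i * v.length + u.length) = σ (i * v.length) from congrFun hρσ _, (hσc i).1]
    exact hq'
  have hinf := hCl x ρ hacc
  obtain ⟨y, hy⟩ := T.exists_outEq hinf
  refine ⟨x, y, hz.listPrepend u, fun c => hout c ▸ hy _, ?_, (hT x y).2 ⟨ρ, hacc, hinf, hy⟩⟩
  rintro rfl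
  obtain ⟨n, hn⟩ := hinf (α.length + 1)
  have := (T.outPrefix_isPrefix x ρ (show n ≤ u.length + n * v.length by nlinarith)).length_le
  rw [hout, powList_nil, List.append_nil] at this
  omega

section Predictable

variable [Nonempty B] {q q' : T.Q} {y : ℕ → B}

/-- Junk unless `q` starts a final run, which every state does when `T` is trim and clean. -/
noncomputable def futureOutput (q : T.Q) : ℕ → B := Classical.epsilon (T.IsFutureOutput q)

def IsPredictable (q : T.Q) : Prop :=
  {y | T.IsFutureOutput q y}.Subsingleton ∧ (shifts (T.futureOutput q)).Finite

theorem isFutureOutput_futureOutput (hTr : T.Trim) (hCl : T.Clean) (q : T.Q) :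
    T.IsFutureOutput q (T.futureOutput q) :=
  Classical.epsilon_spec (T.exists_isFutureOutput hTr hCl q)

theorem IsPredictable.eq_futureOutput (hTr : T.Trim) (hCl : T.Clean) (hq : T.IsPredictable q)
    (hy : T.IsFutureOutput q y) : y = T.futureOutput q :=
  hq.1 hy (T.isFutureOutput_futureOutput hTr hCl q)

theorem IsPredictable.futureOutput_eq (hTr : T.Trim) (hCl : T.Clean) (hq : T.IsPredictable q)
    {a : A} (ht : T.trans q a q') :
    T.futureOutput q = listPrepend (T.out q a q') (T.futureOutput q') :=
  (hq.eq_futureOutput T hTr hCl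
    ((T.isFutureOutput_futureOutput hTr hCl q').listPrepend_out T ht)).symm

theorem IsPredictable.of_trans (hTr : T.Trim) (hCl : T.Clean) (hq : T.IsPredictable q) {a : A}
    (ht : T.trans q a q') : T.IsPredictable q' := by
  refine ⟨fun y hy y' hy' =>
    listPrepend_injective _ (hq.1 (hy.listPrepend_out T ht) (hy'.listPrepend_out T ht)), ?_⟩
  have : T.futureOutput q' = fun i => T.futureOutput q (i + (T.out q a q').length) := by
    simp [hq.futureOutput_eq T hTr hCl ht]
  rw [this]
  exact hq.2.subset (shifts_shift_subset _ _)

theorem isPredictable_of_silent_loop {f : (ℕ → A) → Option (ℕ → B)} (hTr : T.Trim)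
    (hCl : T.Clean) (hT : T.Computes f) (hcont : ContinuousPartial f)
    {q₁ q₂ q₁' q₂' : T.Q} {u u' : List A} {α₁ α₁' α₂ : List B}
    (hq₁ : q₁ ∈ T.I) (hq₂ : q₂ ∈ T.I) (hq₁' : q₁' ∈ T.F) (hu' : u' ≠ [])
    (h₁ : T.FinRun q₁ u α₁ q₁') (h₁' : T.FinRun q₁' u' α₁' q₁')
    (h₂ : T.FinRun q₂ u α₂ q₂') (h₂' : T.FinRun q₂' u' [] q₂') : T.IsPredictable q₂' := by
  obtain ⟨x, Y, hx, hY, hα₁', hfx⟩ := T.exists_eqUVomega_of_lasso hCl hT hq₁ hq₁' hu' h₁ h₁'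
  have hfuture : ∀ y, T.IsFutureOutput q₂' y → y = fun i => Y (i + α₂.length) := by
    rintro y ⟨z, σ, hσ0, hσ⟩
    suffices Y = listPrepend α₂ y by simp [this]
    refine hcont.eq_of_forall_agree hfx fun p => ?_
    have hrun : T.FinRun q₂ (u ++ powList u' p) α₂ q₂' := by
      simpa using h₂.append T (h₂'.pow T p)
    obtain ⟨ρ, hρ0, hρ⟩ := hrun.produces_listPrepend T hσ0 hσ
    have hp : p ≤ p * u'.length := Nat.le_mul_of_pos_right _ (List.length_pos_iff.2 hu')
    exact ⟨_, fun i hi => (hx p).eq_of_lt (prefixOf_listPrepend _ z) (by simp; omega),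
      (hT _ _).2 ⟨ρ, ⟨hρ.1, hρ0 ▸ hq₂, hρ.2.1⟩, hρ.2.2⟩⟩
  refine ⟨fun y hy y' hy' => (hfuture y hy).trans (hfuture y' hy').symm, ?_⟩
  rw [hfuture _ (T.isFutureOutput_futureOutput hTr hCl q₂')]
  exact (hY.finite_shifts hα₁').subset (shifts_shift_subset _ _)

end Predictable

section Eager

variable [Nonempty B] {q q' : T.Q} {w : ℕ → B} {a : A}

open scoped Classical in
noncomputable def pendingWords (q : T.Q) : Set (ℕ → B) :=
  if T.IsPredictable q then shifts (T.futureOutput q) else {T.futureOutput q}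

theorem finite_pendingWords : (⋃ q, T.pendingWords q).Finite :=
  Set.finite_iUnion fun q => by
    unfold pendingWords
    split_ifs with hq
    exacts [hq.2, Set.finite_singleton _]

theorem futureOutput_mem_pendingWords (q : T.Q) : T.futureOutput q ∈ T.pendingWords q := by
  unfold pendingWords
  split_ifs
  exacts [⟨0, rfl⟩, rfl]

noncomputable def eagerLength (q : T.Q) (a : A) (q' : T.Q) : ℕ := max (T.out q a q').length 1

open scoped Classical in
noncomputable def eagerOut (q : T.Q) (w : ℕ → B) (a : A) (q' : T.Q) : List B :=
  if T.IsPredictable q then List.ofFn fun i : Fin (T.eagerLength q a q') => w i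
  else T.out q a q'

open scoped Classical in
noncomputable def nextPending (q : T.Q) (w : ℕ → B) (a : A) (q' : T.Q) : ℕ → B :=
  if T.IsPredictable q then fun i => w (i + T.eagerLength q a q') else T.futureOutput q'

/-- In a state `(q, w)`, `w` is the output still owed. -/
noncomputable def eager : NT A B where
  Q := T.Q × ↥(⋃ q, T.pendingWords q)
  fin := have := T.finite_pendingWords.to_subtype; Fintype.ofFinite _
  I := {s | s.1 ∈ T.I ∧ s.2.1 = T.futureOutput s.1}
  F := {s | s.1 ∈ T.F}
  trans s a s' := T.trans s.1 a s'.1 ∧ s'.2.1 = T.nextPending s.1 s.2.1 a s'.1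
  out s a s' := T.eagerOut s.1 s.2.1 a s'.1

theorem nextPending_mem_pendingWords (hTr : T.Trim) (hCl : T.Clean)
    (hw : w ∈ T.pendingWords q) (ht : T.trans q a q') :
    T.nextPending q w a q' ∈ T.pendingWords q' := by
  by_cases hq : T.IsPredictable q
  · simp only [pendingWords, nextPending, if_pos hq, if_pos (hq.of_trans T hTr hCl ht)] at hw ⊢
    obtain ⟨j, rfl⟩ := hw
    have hℓ : (T.out q a q').length ≤ T.eagerLength q a q' := le_max_left _ _
    refine ⟨j + T.eagerLength q a q' - (T.out q a q').length, funext fun i => ?_⟩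
    simp only [hq.futureOutput_eq T hTr hCl ht]
    rw [listPrepend_of_le _ _ (by omega)]
    congr 1
    omega
  · simpa only [nextPending, if_neg hq] using T.futureOutput_mem_pendingWords q'

theorem eagerOut_ne_nil (hq : T.IsPredictable q) : T.eagerOut q w a q' ≠ [] := by
  simp [eagerOut, if_pos hq, eagerLength]

theorem out_eq_nil_of_eagerOut_eq_nil (h : T.eagerOut q w a q' = []) : T.out q a q' = [] := by
  by_cases hq : T.IsPredictable q
  · exact absurd h (T.eagerOut_ne_nil hq)
  · rwa [eagerOut, if_neg hq] at h

variable {x : ℕ → A} {ρ' ρ₁ ρ₂ : ℕ → T.eager.Q} {y : ℕ → B}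

theorem IsRun.of_eager (h : T.eager.IsRun x ρ') : T.IsRun x fun n => (ρ' n).1 :=
  fun n => (h n).1

theorem Accepting.of_eager (h : T.eager.Accepting x ρ') : T.Accepting x fun n => (ρ' n).1 :=
  ⟨IsRun.of_eager T h.1, h.2.1.1, h.2.2⟩

theorem FinRun.of_eager {s s' : T.eager.Q} {u : List A} {α : List B}
    (h : T.eager.FinRun s u α s') : ∃ β, T.FinRun s.1 u β s'.1 ∧ (α = [] → β = []) := by
  induction h with
  | nil => exact ⟨[], .nil _, fun _ => rfl⟩
  | cons ht _ ih =>
    obtain ⟨β, hβ, hnil⟩ := ih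
    refine ⟨_, .cons ht.1 hβ, fun h => ?_⟩
    rw [List.append_eq_nil_iff] at h
    rw [T.out_eq_nil_of_eagerOut_eq_nil h.1, hnil h.2, List.nil_append]

theorem eager_run_ext (h₁ : T.eager.IsRun x ρ₁) (h₂ : T.eager.IsRun x ρ₂)
    (h₁0 : ρ₁ 0 ∈ T.eager.I) (h₂0 : ρ₂ 0 ∈ T.eager.I) (hfst : ∀ n, (ρ₁ n).1 = (ρ₂ n).1) :
    ρ₁ = ρ₂ := by
  funext n
  induction n with
  | zero => exact Prod.ext (hfst 0) (Subtype.ext (by rw [h₁0.2, h₂0.2, hfst 0]))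
  | succ n ih => exact Prod.ext (hfst _) (Subtype.ext (by rw [(h₁ n).2, (h₂ n).2, ih, hfst]))

theorem exists_eager_run (hTr : T.Trim) (hCl : T.Clean) {ρ : ℕ → T.Q} (h : T.IsRun x ρ) :
    ∃ ρ' : ℕ → T.eager.Q, T.eager.IsRun x ρ' ∧ (fun n => (ρ' n).1) = ρ ∧
      (ρ' 0).2.1 = T.futureOutput (ρ 0) := by
  let w : ℕ → ℕ → B := fun n =>
    Nat.rec (motive := fun _ => ℕ → B) (T.futureOutput (ρ 0))
      (fun n w => T.nextPending (ρ n) w (x n) (ρ (n + 1))) n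
  have hw : ∀ n, w n ∈ T.pendingWords (ρ n) := fun n => by
    induction n with
    | zero => exact T.futureOutput_mem_pendingWords _
    | succ n ih => exact T.nextPending_mem_pendingWords hTr hCl ih (h n)
  exact ⟨fun n => (ρ n, ⟨w n, Set.mem_iUnion.2 ⟨_, hw n⟩⟩), fun n => ⟨h n, rfl⟩, rfl, rfl⟩

theorem listPrepend_outPrefix_futureOutput (hTr : T.Trim) (hCl : T.Clean) {ρ : ℕ → T.Q}
    (h : T.Produces x ρ y) {n : ℕ} (hq : T.IsPredictable (ρ n)) :
    listPrepend (T.outPrefix x ρ n) (T.futureOutput (ρ n)) = y := by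
  rw [← hq.eq_futureOutput T hTr hCl (h.isFutureOutput T n), listPrepend_eq_of_prefixOf (h.2.2.2 n)]

open scoped Classical in
theorem eager_outPrefix_spec (hTr : T.Trim) (hCl : T.Clean) (hρ' : T.eager.IsRun x ρ')
    (h0 : ρ' 0 ∈ T.eager.I) (hy : T.Produces x (fun n => (ρ' n).1) y) (n : ℕ) :
    if T.IsPredictable (ρ' n).1 then
      listPrepend (T.eager.outPrefix x ρ' n) (ρ' n).2.1 = y ∧
        (T.outPrefix x (fun n => (ρ' n).1) n).length ≤ (T.eager.outPrefix x ρ' n).length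
    else T.eager.outPrefix x ρ' n = T.outPrefix x (fun n => (ρ' n).1) n := by
  set ρ : ℕ → T.Q := fun n => (ρ' n).1 with hρ
  induction n with
  | zero =>
    split_ifs with hq
    · refine ⟨?_, by simp⟩
      rw [outPrefix_zero, h0.2, ← T.listPrepend_outPrefix_futureOutput hTr hCl hy hq]
      rfl
    · simp
  | succ n ih =>
    have hout' : T.eager.outPrefix x ρ' (n + 1) =
        T.eager.outPrefix x ρ' n ++ T.eagerOut (ρ n) (ρ' n).2.1 (x n) (ρ (n + 1)) :=
      outPrefix_succ _ _ _ _
    have hout : T.outPrefix x ρ (n + 1) = T.outPrefix x ρ n ++ T.out (ρ n) (x n) (ρ (n + 1)) :=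
      outPrefix_succ _ _ _ _
    have hnext : (ρ' (n + 1)).2.1 = T.nextPending (ρ n) (ρ' n).2.1 (x n) (ρ (n + 1)) :=
      (hρ' n).2
    by_cases hq : T.IsPredictable (ρ n)
    · rw [if_pos hq] at ih
      rw [if_pos (hq.of_trans T hTr hCl (hρ' n).1), hout', hout, hnext]
      have hℓ : (T.out (ρ n) (x n) (ρ (n + 1))).length ≤ T.eagerLength (ρ n) (x n) (ρ (n + 1)) :=
        le_max_left _ _
      simp only [eagerOut, nextPending, if_pos hq, List.length_append, List.length_ofFn]
      refine ⟨?_, by omega⟩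
      rw [listPrepend_append, ← ih.1]
      congr 1
      simpa using listPrepend_eq_of_prefixOf (prefixOf_ofFn (ρ' n).2.1 (T.eagerLength _ _ _))
    · rw [if_neg hq] at ih
      have heq : T.eager.outPrefix x ρ' (n + 1) = T.outPrefix x ρ (n + 1) := by
        rw [hout', hout, ih, eagerOut, if_neg hq]
      rw [heq]
      split_ifs with hq'
      · refine ⟨?_, le_rfl⟩
        rw [hnext, nextPending, if_neg hq]
        exact T.listPrepend_outPrefix_futureOutput hTr hCl hy hq'
      · rfl

theorem eager_infiniteOutput_outEq (hTr : T.Trim) (hCl : T.Clean) (hρ' : T.eager.IsRun x ρ')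
    (h0 : ρ' 0 ∈ T.eager.I) (hy : T.Produces x (fun n => (ρ' n).1) y) :
    T.eager.InfiniteOutput x ρ' ∧ T.eager.OutEq x ρ' y := by
  have key : ∀ n, PrefixOf (T.eager.outPrefix x ρ' n) y ∧
      (T.outPrefix x (fun n => (ρ' n).1) n).length ≤ (T.eager.outPrefix x ρ' n).length := by
    intro n
    have := T.eager_outPrefix_spec hTr hCl hρ' h0 hy n
    split_ifs at this
    · exact ⟨this.1 ▸ prefixOf_listPrepend _ _, this.2⟩
    · exact ⟨this ▸ hy.2.2.2 n, this ▸ le_rfl⟩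
  refine ⟨fun m => ?_, fun n => (key n).1⟩
  obtain ⟨n, hn⟩ := hy.2.2.1 m
  exact ⟨n, hn.trans (key n).2⟩

theorem eager_unambiguous (hU : T.Unambiguous) : T.eager.Unambiguous := fun x _ _ h₁ h₂ =>
  T.eager_run_ext h₁.1 h₂.1 h₁.2.1 h₂.2.1
    (congrFun (hU x _ _ (Accepting.of_eager T h₁) (Accepting.of_eager T h₂)))

theorem eager_clean (hTr : T.Trim) (hCl : T.Clean) : T.eager.Clean := fun _ _ h => by
  have hacc := Accepting.of_eager T h
  obtain ⟨y, hy⟩ := T.exists_outEq (hCl _ _ hacc)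
  exact (T.eager_infiniteOutput_outEq hTr hCl h.1 h.2.1 ⟨hacc.1, hacc.2.2, hCl _ _ hacc, hy⟩).1

theorem eager_computes {f : (ℕ → A) → Option (ℕ → B)} (hTr : T.Trim) (hCl : T.Clean)
    (hT : T.Computes f) : T.eager.Computes f := by
  intro x y
  rw [hT x y]
  constructor
  · rintro ⟨ρ, hacc, hinf, hy⟩
    obtain ⟨ρ', hρ', rfl, h0⟩ := T.exists_eager_run hTr hCl hacc.1
    exact ⟨ρ', ⟨hρ', ⟨hacc.2.1, h0⟩, hacc.2.2⟩,
      T.eager_infiniteOutput_outEq hTr hCl hρ' ⟨hacc.2.1, h0⟩ ⟨hacc.1, hacc.2.2, hinf, hy⟩⟩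
  · rintro ⟨ρ', hacc', hinf', hy'⟩
    have hacc := Accepting.of_eager T hacc'
    obtain ⟨y₀, hy₀⟩ := T.exists_outEq (hCl _ _ hacc)
    have h₀ := T.eager_infiniteOutput_outEq hTr hCl hacc'.1 hacc'.2.1
      ⟨hacc.1, hacc.2.2, hCl _ _ hacc, hy₀⟩
    rw [OutEq.unique _ hy' h₀.2 hinf']
    exact ⟨_, hacc, hCl _ _ hacc, hy₀⟩

theorem eager_productive {f : (ℕ → A) → Option (ℕ → B)} (hTr : T.Trim) (hCl : T.Clean)
    (hT : T.Computes f) (hcont : ContinuousPartial f) : T.eager.Productive := by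
  intro q₁ q₂ q₁' q₂' u u' α₁ α₁' α₂ α₂' hq₁ hq₂ hq₁' hu' h₁ h₁' h₂ h₂'
  by_cases hq : T.IsPredictable q₂'.1
  · cases h₂' with
    | nil => exact absurd rfl hu'
    | cons => exact List.append_ne_nil_of_left_ne_nil (T.eagerOut_ne_nil hq) _
  · intro hα
    obtain ⟨_, h₁, -⟩ := FinRun.of_eager T h₁
    obtain ⟨_, h₁', -⟩ := FinRun.of_eager T h₁'
    obtain ⟨_, h₂, -⟩ := FinRun.of_eager T h₂
    obtain ⟨β, h₂', hβ⟩ := FinRun.of_eager T h₂'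
    rw [hβ hα] at h₂'
    exact hq (T.isPredictable_of_silent_loop hTr hCl hT hcont hq₁.1 hq₂.1 hq₁' hu' h₁ h₁' h₂ h₂')

end Eager

section RestrictUseful

noncomputable def restrictUseful : NT A B where
  Q := {q : T.Q // ∃ x ρ, T.Accepting x ρ ∧ ∃ i, ρ i = q}
  fin := Fintype.ofFinite _
  I := Subtype.val ⁻¹' T.I
  F := Subtype.val ⁻¹' T.F
  trans q a q' := T.trans q a q'
  out q a q' := T.out q a q'

variable {T} {x : ℕ → A}

theorem Accepting.exists_restrictUseful {ρ : ℕ → T.Q} (h : T.Accepting x ρ) :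
    ∃ ρ' : ℕ → T.restrictUseful.Q, (fun n => (ρ' n).1) = ρ ∧ T.restrictUseful.Accepting x ρ' :=
  ⟨fun n => ⟨ρ n, x, ρ, h, n, rfl⟩, rfl, h⟩

theorem restrictUseful_trim : T.restrictUseful.Trim := by
  rintro ⟨q, x, ρ, h, i, rfl⟩
  obtain ⟨ρ', rfl, h'⟩ := h.exists_restrictUseful
  exact ⟨x, ρ', h', i, rfl⟩

theorem Unambiguous.restrictUseful (hU : T.Unambiguous) : T.restrictUseful.Unambiguous :=
  fun x _ _ h₁ h₂ => funext fun n => Subtype.ext (congrFun (hU x _ _ h₁ h₂) n)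

theorem Clean.restrictUseful (hCl : T.Clean) : T.restrictUseful.Clean :=
  fun x _ h => hCl x _ h

theorem Computes.restrictUseful {f : (ℕ → A) → Option (ℕ → B)} (hT : T.Computes f) :
    T.restrictUseful.Computes f := by
  intro x y
  rw [hT x y]
  constructor
  · rintro ⟨ρ, h, hinf, hy⟩
    obtain ⟨ρ', rfl, h'⟩ := h.exists_restrictUseful
    exact ⟨ρ', h', hinf, hy⟩
  · rintro ⟨ρ', h', hinf, hy⟩
    exact ⟨_, h', hinf, hy⟩

theorem FinRun.of_restrictUseful {s s' : T.restrictUseful.Q} {u : List A} {α : List B}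
    (h : T.restrictUseful.FinRun s u α s') : T.FinRun s.1 u α s'.1 := by
  induction h with
  | nil => exact .nil _
  | cons ht _ ih => exact .cons ht ih

theorem Productive.restrictUseful (hP : T.Productive) : T.restrictUseful.Productive :=
  fun _ _ _ _ _ _ _ _ _ _ hq₁ hq₂ hq₁' hu' h₁ h₁' h₂ h₂' =>
    hP _ _ _ _ _ _ _ _ _ _ hq₁ hq₂ hq₁' hu' h₁.of_restrictUseful h₁'.of_restrictUseful
      h₂.of_restrictUseful h₂'.of_restrictUseful

end RestrictUseful

end NT

theorem exists_productive_equivalent_general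
    {A B : Type}
    (T : NT A B) (f : (ℕ → A) → Option (ℕ → B))
    (hU : T.Unambiguous) (hCl : T.Clean) (hTr : T.Trim)
    (hT : T.Computes f) (hcont : ContinuousPartial f) :
    ∃ T' : NT A B, T'.Unambiguous ∧ T'.Clean ∧ T'.Trim ∧ T'.Productive ∧
      T'.Computes f := by
  rcases isEmpty_or_nonempty T.Q with hQ | ⟨⟨q⟩⟩
  · exact ⟨T, hU, hCl, hTr, fun q₁ => isEmptyElim q₁, hT⟩
  have : Nonempty B := ⟨(T.exists_isFutureOutput hTr hCl q).choose 0⟩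
  exact ⟨T.eager.restrictUseful, (T.eager_unambiguous hU).restrictUseful,
    (T.eager_clean hTr hCl).restrictUseful, NT.restrictUseful_trim,
    (T.eager_productive hTr hCl hT hcont).restrictUseful,
    (T.eager_computes hTr hCl hT).restrictUseful⟩

/-- Every unambiguous, clean and trim 1-nT computing a continuous function is
equivalent to an unambiguous, clean, trim and productive 1-nT. -/
theorem exists_productive_equivalent
    {A B : Type} [Fintype A] [Fintype B]
    (T : NT A B) (f : (ℕ → A) → Option (ℕ → B))
    (hU : T.Unambiguous) (hCl : T.Clean) (hTr : T.Trim)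
    (hT : T.Computes f) (hcont : ContinuousPartial f) :
    ∃ T' : NT A B, T'.Unambiguous ∧ T'.Clean ∧ T'.Trim ∧ T'.Productive ∧
      T'.Computes f :=
  exists_productive_equivalent_general T f hU hCl hTr hT hcont
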